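/- Let p_1, p_2, ..., p_n ∈ (0,1) and π_k^n the Poisson binomial mass function. Then ∂π_k^n/∂p_1 − ∂π_k^n/∂p_2 = −(p_1 − p_2)(π_{k−2}^{n−2} − 2π_{k−1}^{n−2} + π_k^{n−2}), where π_j^{n−2} = π_j^{n−2}(p_3,...,p_n) with the convention π_j^{n−2} = 0 for j < 0 or j > n−2. -/

import Mathlib

/-!
`π_k^n(p)` is the coefficient of `x^k` in `∏ᵢ (1 + pᵢ (x - 1))`. Splitting off the first two
factors, `π_k^n` is affine in `p₀` with slope the coefficient of `x^k` in
`(x - 1)(1 + p₁ (x - 1)) R`, where `R` is the generating polynomial of `p₂, …, p_{n-1}`, and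
symmetrically in `p₁`. The difference of the two slopes is the coefficient of `x^k` in
`-(p₀ - p₁)(x - 1)² R`, and expanding `(x - 1)² = x² - 2x + 1` gives the three shifted masses.
-/

open Polynomial Finset

def poissonBinomial (n : ℕ) (p : ℕ → ℝ) (k : ℕ) : ℝ :=
  ∑ A ∈ (Finset.range n).powersetCard k,
    (∏ i ∈ A, p i) * ∏ j ∈ Finset.range n \ A, (1 - p j)

noncomputable def bernoulliGenPoly (q : ℝ) : ℝ[X] :=
  C q * (X - 1) + 1

noncomputable def poissonBinomialPoly (n : ℕ) (p : ℕ → ℝ) : ℝ[X] :=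
  ∏ i ∈ range n, bernoulliGenPoly (p i)

theorem poissonBinomial_eq_coeff (n : ℕ) (p : ℕ → ℝ) (k : ℕ) :
    poissonBinomial n p k = (poissonBinomialPoly n p).coeff k := by
  have hfactor : ∀ q, bernoulliGenPoly q = C q * X + C (1 - q) := fun q => by
    rw [bernoulliGenPoly, map_sub, map_one]; ring
  simp only [poissonBinomialPoly, hfactor]
  rw [prod_add, finsetSum_coeff, poissonBinomial, powersetCard_eq_filter, sum_filter]
  refine sum_congr rfl fun A _ => ?_
  have hterm : (∏ i ∈ A, C (p i) * X) * ∏ j ∈ range n \ A, C (1 - p j)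
      = C ((∏ i ∈ A, p i) * ∏ j ∈ range n \ A, (1 - p j)) * X ^ A.card := by
    rw [prod_mul_distrib, prod_const, map_mul, map_prod, map_prod]
    ring
  rw [hterm, coeff_C_mul, coeff_X_pow]
  by_cases hk : A.card = k
  · simp [hk]
  · simp [hk, Ne.symm hk]

theorem poissonBinomialPoly_add_two (m : ℕ) (p : ℕ → ℝ) :
    poissonBinomialPoly (m + 2) p
      = bernoulliGenPoly (p 0) * (bernoulliGenPoly (p 1)
          * poissonBinomialPoly m (fun i => p (i + 2))) := by
  rw [poissonBinomialPoly, prod_range_succ', prod_range_succ', poissonBinomialPoly]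
  ring

theorem hasDerivAt_coeff_bernoulliGenPoly_mul (P : ℝ[X]) (k : ℕ) (x : ℝ) :
    HasDerivAt (fun t => (bernoulliGenPoly t * P).coeff k) (((X - 1) * P).coeff k) x := by
  have hlin : ∀ t, bernoulliGenPoly t * P = C t * ((X - 1) * P) + P := fun t => by
    rw [bernoulliGenPoly]; ring
  simp only [hlin, coeff_add, coeff_C_mul]
  simpa using ((hasDerivAt_id x).mul_const (((X - 1) * P).coeff k)).add_const (P.coeff k)

theorem coeff_X_sub_one_sq_mul {R : Type*} [CommRing R] (P : R[X]) (k : ℕ) :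
    ((X - 1) ^ 2 * P).coeff k
      = (if 2 ≤ k then P.coeff (k - 2) else 0) - 2 * (if 1 ≤ k then P.coeff (k - 1) else 0)
          + P.coeff k := by
  have hexpand : (X - 1) ^ 2 * P = X ^ 2 * P - C 2 * (X ^ 1 * P) + P := by
    rw [C_ofNat]; ring
  rw [hexpand, coeff_add, coeff_sub, coeff_C_mul, coeff_X_pow_mul', coeff_X_pow_mul']

theorem poissonBinomial_deriv_diff_general
    (n : ℕ) (hn : 2 ≤ n) (p : ℕ → ℝ) (k : ℕ) :
    deriv (fun t => poissonBinomial n (Function.update p 0 t) k) (p 0)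
      - deriv (fun t => poissonBinomial n (Function.update p 1 t) k) (p 1)
    = -(p 0 - p 1) *
        ((if 2 ≤ k then poissonBinomial (n - 2) (fun i => p (i + 2)) (k - 2) else 0)
          - 2 * (if 1 ≤ k then poissonBinomial (n - 2) (fun i => p (i + 2)) (k - 1) else 0)
          + poissonBinomial (n - 2) (fun i => p (i + 2)) k) := by
  obtain ⟨m, rfl⟩ : ∃ m, n = m + 2 := ⟨n - 2, by omega⟩
  set R := poissonBinomialPoly m (fun i => p (i + 2))
  have hfst : (fun t => poissonBinomial (m + 2) (Function.update p 0 t) k)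
      = fun t => (bernoulliGenPoly t * (bernoulliGenPoly (p 1) * R)).coeff k := by
    funext t
    simp [poissonBinomial_eq_coeff, poissonBinomialPoly_add_two, R]
  have hsnd : (fun t => poissonBinomial (m + 2) (Function.update p 1 t) k)
      = fun t => (bernoulliGenPoly t * (bernoulliGenPoly (p 0) * R)).coeff k := by
    funext t
    simp [poissonBinomial_eq_coeff, poissonBinomialPoly_add_two, R,
      mul_left_comm]
  have hslopes : (X - 1) * (bernoulliGenPoly (p 1) * R) - (X - 1) * (bernoulliGenPoly (p 0) * R)
      = C (-(p 0 - p 1)) * ((X - 1) ^ 2 * R) := by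
    simp only [bernoulliGenPoly, map_neg, map_sub]
    ring
  rw [hfst, hsnd, (hasDerivAt_coeff_bernoulliGenPoly_mul _ _ _).deriv,
    (hasDerivAt_coeff_bernoulliGenPoly_mul _ _ _).deriv, ← coeff_sub, hslopes, coeff_C_mul,
    coeff_X_sub_one_sq_mul, Nat.add_sub_cancel]
  simp only [poissonBinomial_eq_coeff, R]

/-- Difference of partial derivatives of the Poisson binomial mass function with
respect to the first two success probabilities:
`∂π_k^n/∂p₁ − ∂π_k^n/∂p₂ = −(p₁−p₂)(π_{k−2}^{n−2} − 2π_{k−1}^{n−2} + π_k^{n−2})`,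
with the convention `π_j^{n−2} = 0` for `j < 0` (and automatically for `j > n−2`). -/
theorem poissonBinomial_deriv_diff
    (n : ℕ) (hn : 2 ≤ n) (p : ℕ → ℝ)
    (hp : ∀ i < n, p i ∈ Set.Ioo (0 : ℝ) 1) (k : ℕ) :
    deriv (fun t => poissonBinomial n (Function.update p 0 t) k) (p 0)
      - deriv (fun t => poissonBinomial n (Function.update p 1 t) k) (p 1)
    = -(p 0 - p 1) *
        ((if 2 ≤ k then poissonBinomial (n - 2) (fun i => p (i + 2)) (k - 2) else 0)
          - 2 * (if 1 ≤ k then poissonBinomial (n - 2) (fun i => p (i + 2)) (k - 1) else 0)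
          + poissonBinomial (n - 2) (fun i => p (i + 2)) k) :=
  poissonBinomial_deriv_diff_general n hn p k
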